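/- Let A′ = x·𝟙_{g+1} + L(I_{2,g+1}; V_{1,g}), i.e., the matrix A in which I_1 and V_{g+1} are replaced by 0 (so that the corner entry (1,g+1) of L becomes 0, the entry (g+1,g) becomes 0, and the entry (g+1,g+1) becomes 0, while the corner entry (g+1,1) stays (−1)^g y). Let T be the g×g tridiagonal matrix with diagonal entries T_{ii} = I_{i+1} + V_i + x for i = 1,…,g, superdiagonal entries T_{i,i+1} = 1, and subdiagonal entries T_{i+1,i} = I_{i+1}V_{i+1} for i = 1,…,g−1. Then x·det T = det A′ − y; equivalently, for x ≠ 0, det T = (det(x·𝟙 + L(I_{2,g+1}; V_{1,g})) − y)/x. -/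

import Mathlib

/-!
Once `I₁ = V_{g+1} = 0`, the last row of `A'` is `((-1)^g y, 0, …, 0, x)`. Expanding `det A'`
along it, the minor of the entry `x` is the upper-left block of `A'`, which is `T`, and the
minor of `(-1)^g y` is lower unitriangular (the superdiagonal `1`s of `L` become its diagonal,
and its only entry above the diagonal is the corner `(-1)^g I₁ V₁ / y = 0`). Hence
`det A' = x det T + y`.
-/

/-- The Lax matrix `L(I;V)` of the periodic discrete Toda lattice (0-indexed:
row/column `i : Fin (g+1)` corresponds to the 1-indexed `i+1`).  Its entries are
`L_{ii} = I_{i+1} + V_i` (cyclically, so the last diagonal entry is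
`I_1 + V_{g+1}`), `L_{i,i+1} = 1`, `L_{i+1,i} = I_{i+1} V_{i+1}`,
`L_{1,g+1} = (-1)^g I_1 V_1 / y`, `L_{g+1,1} = (-1)^g y`,
all other entries `0`. -/
noncomputable def todaLax (g : ℕ) (I V : Fin (g + 1) → ℂ) (y : ℂ) :
    Matrix (Fin (g + 1)) (Fin (g + 1)) ℂ :=
  Matrix.of fun i j =>
    (if j = i then I (i + 1) + V i else 0)
    + (if (i : ℕ) + 1 = (j : ℕ) then 1 else 0)
    + (if (j : ℕ) + 1 = (i : ℕ) then I i * V i else 0)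
    + (if (i : ℕ) = 0 ∧ (j : ℕ) = g then (-1) ^ g * I 0 * V 0 / y else 0)
    + (if (i : ℕ) = g ∧ (j : ℕ) = 0 then (-1) ^ g * y else 0)

/-- The `g × g` tridiagonal matrix `T` with diagonal entries
`T_{ii} = I_{i+1} + V_i + x` (1-indexed `i = 1, …, g`), superdiagonal entries
`1`, and subdiagonal entries `T_{i+1,i} = I_{i+1} V_{i+1}` (1-indexed
`i = 1, …, g-1`). -/
noncomputable def todaT (g : ℕ) (I V : Fin (g + 1) → ℂ) (x : ℂ) :
    Matrix (Fin g) (Fin g) ℂ :=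
  Matrix.of fun r c =>
    if r = c then I r.succ + V r.castSucc + x
    else if (r : ℕ) + 1 = (c : ℕ) then 1
    else if (c : ℕ) + 1 = (r : ℕ) then I r.castSucc * V r.castSucc
    else 0

open Matrix

theorem Matrix.det_of_row_last_eq_single_add_single {R : Type*} [CommRing R] {g : ℕ}
    (M : Matrix (Fin (g + 1)) (Fin (g + 1)) R) (a b : R)
    (h : M (Fin.last g) = Pi.single 0 a + Pi.single (Fin.last g) b) :
    M.det = (-1) ^ g * a * (M.submatrix Fin.castSucc Fin.succ).det
      + b * (M.submatrix Fin.castSucc Fin.castSucc).det := by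
  rw [det_succ_row M (Fin.last g), h]
  simp only [Pi.add_apply, Pi.single_apply, mul_add, add_mul, Finset.sum_add_distrib, mul_ite,
    ite_mul, mul_zero, zero_mul, Finset.sum_ite_eq', Finset.mem_univ, if_true,
    Fin.succAbove_zero, Fin.succAbove_last, Fin.val_last, Fin.val_zero, add_zero]
  rw [Even.neg_one_pow ⟨g, rfl⟩, one_mul]

section
variable {g : ℕ} (I V : Fin (g + 1) → ℂ) (x y : ℂ)

theorem smul_one_add_todaLax_submatrix_castSucc :
    (x • (1 : Matrix (Fin (g + 1)) (Fin (g + 1)) ℂ) + todaLax g I V y).submatrix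
      Fin.castSucc Fin.castSucc = todaT g I V x := by
  ext r c
  have hr := r.is_lt
  have hc := c.is_lt
  simp only [submatrix_apply, Matrix.add_apply, Matrix.smul_apply, one_apply, todaLax, todaT,
    of_apply, Fin.castSucc_inj, Fin.val_castSucc, smul_eq_mul]
  have h1 : ¬ ((r : ℕ) = 0 ∧ (c : ℕ) = g) := by omega
  have h2 : ¬ ((r : ℕ) = g ∧ (c : ℕ) = 0) := by omega
  simp only [Fin.coeSucc_eq_succ, h1, h2, if_false, add_zero]
  rcases eq_or_ne r c with rfl | hrc
  · simp only [if_true, if_neg (Nat.succ_ne_self _)]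
    ring
  · rw [if_neg hrc, if_neg hrc.symm, if_neg hrc]
    split_ifs <;> first | omega | ring

theorem det_smul_one_add_todaLax_submatrix_castSucc_succ (hI : I 0 = 0) :
    ((x • (1 : Matrix (Fin (g + 1)) (Fin (g + 1)) ℂ) + todaLax g I V y).submatrix
      Fin.castSucc Fin.succ).det = 1 := by
  set M := (x • (1 : Matrix (Fin (g + 1)) (Fin (g + 1)) ℂ) + todaLax g I V y).submatrix
    Fin.castSucc Fin.succ
  have hupper : ∀ r c : Fin g, (r : ℕ) ≤ c → M r c = if r = c then 1 else 0 := by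
    intro r c hrc
    simp only [M, submatrix_apply, Matrix.add_apply, Matrix.smul_apply, one_apply, todaLax,
      of_apply, Fin.val_castSucc, Fin.val_succ, smul_eq_mul, hI, mul_zero, zero_mul, zero_div,
      Fin.ext_iff]
    split_ifs <;> first | omega | simp
  have hlower : M.IsLowerTriangular := fun r c (h : r < c) => by
    rw [hupper r c h.le, if_neg h.ne]
  rw [det_of_isLowerTriangular M hlower]
  exact Finset.prod_eq_one fun r _ => by rw [hupper r r le_rfl, if_pos rfl]

theorem smul_one_add_todaLax_row_last (hI : I 0 = 0) (hV : V (Fin.last g) = 0) :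
    (x • (1 : Matrix (Fin (g + 1)) (Fin (g + 1)) ℂ) + todaLax g I V y) (Fin.last g)
      = (Pi.single 0 ((-1) ^ g * y) + Pi.single (Fin.last g) x : Fin (g + 1) → ℂ) := by
  funext j
  have hj := j.is_lt
  simp only [Matrix.add_apply, Matrix.smul_apply, one_apply, todaLax, of_apply, Fin.val_last,
    Fin.last_add_one, hI, hV, smul_eq_mul, mul_zero, zero_mul, zero_div, add_zero, Pi.add_apply,
    Pi.single_apply, true_and, ite_self, Fin.ext_iff, Fin.val_zero]
  split_ifs <;> first | omega | ring

theorem todaT_update_zero_update_last (a b : ℂ) :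
    todaT g (Function.update I 0 a) (Function.update V (Fin.last g) b) x = todaT g I V x := by
  ext r c
  simp only [todaT, of_apply, Function.update_of_ne (Fin.succ_ne_zero r),
    Function.update_of_ne (Fin.castSucc_lt_last r).ne]
  split_ifs with _ _ hsub
  · rfl
  · rfl
  · have hr : r.castSucc ≠ 0 := by
      simp only [ne_eq, Fin.ext_iff, Fin.val_castSucc, Fin.val_zero]
      omega
    rw [Function.update_of_ne hr]
  · rfl

theorem det_smul_one_add_todaLax_of_eq_zero (hI : I 0 = 0) (hV : V (Fin.last g) = 0) :
    (x • (1 : Matrix (Fin (g + 1)) (Fin (g + 1)) ℂ) + todaLax g I V y).det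
      = y + x * (todaT g I V x).det := by
  rw [det_of_row_last_eq_single_add_single _ _ _ (smul_one_add_todaLax_row_last I V x y hI hV),
    det_smul_one_add_todaLax_submatrix_castSucc_succ I V x y hI,
    smul_one_add_todaLax_submatrix_castSucc, ← mul_assoc, ← pow_add,
    Even.neg_one_pow ⟨g, rfl⟩]
  ring

end

theorem todaT_det_eq_general (g : ℕ) (I V : Fin (g + 1) → ℂ) (x y : ℂ) :
    x * (todaT g I V x).det =
        (x • (1 : Matrix (Fin (g + 1)) (Fin (g + 1)) ℂ) +
          todaLax g (Function.update I 0 0) (Function.update V (Fin.last g) 0) y).det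
        - y ∧
    (x ≠ 0 →
      (todaT g I V x).det =
        ((x • (1 : Matrix (Fin (g + 1)) (Fin (g + 1)) ℂ) +
            todaLax g (Function.update I 0 0) (Function.update V (Fin.last g) 0) y).det
          - y) / x) := by
  have key := det_smul_one_add_todaLax_of_eq_zero (Function.update I 0 0)
    (Function.update V (Fin.last g) 0) x y (Function.update_self _ _ _) (Function.update_self _ _ _)
  rw [todaT_update_zero_update_last] at key
  rw [key]
  exact ⟨by ring, fun hx => eq_div_of_mul_eq hx (by ring)⟩

/-- With `A' = x·𝟙 + L(I_{2,g+1}; V_{1,g})` (i.e. `A = x·𝟙 + L` with `I_1` and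
`V_{g+1}` replaced by `0`), one has `x·det T = det A' - y`; equivalently, for
`x ≠ 0`, `det T = (det A' - y)/x`. -/
theorem todaT_det_eq (g : ℕ) (hg : 1 ≤ g) (I V : Fin (g + 1) → ℂ) (x y : ℂ)
    (hy : y ≠ 0) :
    x * (todaT g I V x).det =
        (x • (1 : Matrix (Fin (g + 1)) (Fin (g + 1)) ℂ) +
          todaLax g (Function.update I 0 0) (Function.update V (Fin.last g) 0) y).det
        - y ∧
    (x ≠ 0 →
      (todaT g I V x).det =
        ((x • (1 : Matrix (Fin (g + 1)) (Fin (g + 1)) ℂ) +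
            todaLax g (Function.update I 0 0) (Function.update V (Fin.last g) 0) y).det
          - y) / x) :=
  todaT_det_eq_general g I V x y
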